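/- A matroid is both finitary and cofinitary if and only if it is a direct sum of finite matroids. -/

import Mathlib

open Set Matroid

variable {α : Type*}

/-- A circuit of a (possibly infinite) matroid: a minimal dependent set. -/
def Circuit (M : Matroid α) (C : Set α) : Prop :=
  M.Dep C ∧ ∀ C' ⊂ C, ¬ M.Dep C'

/-- A cocircuit: a circuit of the dual matroid. -/
def Cocircuit (M : Matroid α) (D : Set α) : Prop :=
  Circuit M✶ D

/-- Deletion of the set `D` from the matroid `M`. -/
def delete (M : Matroid α) (D : Set α) : Matroid α :=
  M ↾ (M.E \ D)

/-- Contraction of the set `C` in the matroid `M`, i.e. `M/C = (M✶ − C)✶`. -/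
def contract (M : Matroid α) (C : Set α) : Matroid α :=
  (_root_.delete M✶ C)✶

/-- `del M I J` : the minimum cardinality of a finite `F ⊆ I ∪ J` with
`(I ∪ J) \ F` independent in `M`, or `∞` if no such finite set exists. -/
noncomputable def del (M : Matroid α) (I J : Set α) : ℕ∞ :=
  sInf {n : ℕ∞ | ∃ F : Set α, F.Finite ∧ F ⊆ I ∪ J ∧ M.Indep ((I ∪ J) \ F) ∧ n = F.encard}

/-- The connectivity function `κ_M(X)`, defined via `del` on bases of `M|X`
and `M|(E \ X)` (its value does not depend on the choice of bases). -/
noncomputable def conn (M : Matroid α) (X : Set α) : ℕ∞ :=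
  ⨅ B ∈ {B | (M ↾ X).IsBase B}, ⨅ B' ∈ {B' | (M ↾ (M.E \ X)).IsBase B'}, del M B B'

/-- `κ_M(X,Y) = min {κ_M(U) : X ⊆ U ⊆ E(M) \ Y}`. -/
noncomputable def connBtw (M : Matroid α) (X Y : Set α) : ℕ∞ :=
  ⨅ U ∈ {U | X ⊆ U ∧ U ⊆ M.E \ Y}, conn M U

/-- `x ~ y` iff `x = y` or some circuit contains both `x` and `y`. -/
def ConnRel (M : Matroid α) (x y : α) : Prop :=
  x = y ∨ ∃ C, Circuit M C ∧ x ∈ C ∧ y ∈ C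

/-!
Fix a base `B` and join every `e ∈ E \ B` to the other elements of its fundamental circuit.
If `M` is finitary and cofinitary, this bipartite graph is locally finite, since the neighbours
of `e` lie in its fundamental circuit or cocircuit. Strong circuit elimination against fundamental
circuits keeps every circuit inside one component, so the components decompose `M`.

No component is infinite. If one were, Kőnig's lemma would give an induced ray
`β 0, ε 0, β 1, ε 1, …` with the `β i` in `B` and the `ε j` outside `B`. Let
`Z = (B \ {β i}) ∪ {ε j}`. A circuit `C ⊆ insert (β 0) Z` through `β 0` meets the fundamental
cocircuit of `β (j + 1)` only in `ε j` and `ε (j + 1)`, and that of `β 0` only in `β 0` and `ε 0`.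
A circuit and a cocircuit never meet in exactly one element, so `C` would contain every `ε j`.
Hence `β 0 ∉ cl Z`, and some cocircuit `K` through `β 0` avoids `Z`. In the same way, `K` meets
the fundamental circuit of `ε i` only in `β i` and `β (i + 1)`, so `K` contains every `β i`.
Either way, some circuit or cocircuit is infinite.

Conversely, in a direct sum every circuit lies in one summand. Gluing bases of the summands shows
that the same holds for the dual.
-/

namespace SimpleGraph

variable {V : Type*} {G : SimpleGraph V} {x v : V} {n : ℕ}

lemma Reachable.exists_adj_dist_eq (h : G.Reachable x v) (hv : G.dist x v = n + 1) :
    ∃ w, G.Reachable x w ∧ G.Adj w v ∧ G.dist x w = n := by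
  obtain ⟨p, hp⟩ := h.exists_walk_length_eq_dist
  have hp' : ¬ p.Nil := by rw [← Walk.length_eq_zero_iff]; omega
  have hadj := p.adj_penultimate hp'
  have hle := G.dist_le p.dropLast
  have hge := hadj.reachable.dist_triangle_right x
  rw [Walk.length_dropLast] at hle
  rw [dist_eq_one_iff_adj.2 hadj] at hge
  exact ⟨p.penultimate, ⟨p.dropLast⟩, hadj, by omega⟩

lemma exists_parent_map (x : V) : ∃ par : V → V, ∀ v, G.Reachable x v → G.dist x v ≠ 0 →
    G.Reachable x (par v) ∧ G.Adj (par v) v ∧ G.dist x (par v) + 1 = G.dist x v := by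
  choose par hpar using fun v : V => show ∃ w, G.Reachable x v → G.dist x v ≠ 0 →
      G.Reachable x w ∧ G.Adj w v ∧ G.dist x w + 1 = G.dist x v by
    by_cases h : G.Reachable x v ∧ G.dist x v ≠ 0
    · obtain ⟨w, hw, hwv, hwd⟩ := h.1.exists_adj_dist_eq (n := G.dist x v - 1) (by omega)
      exact ⟨w, fun _ _ => ⟨hw, hwv, by omega⟩⟩
    · exact ⟨v, fun h1 h2 => absurd ⟨h1, h2⟩ h⟩
  exact ⟨par, hpar⟩

lemma exists_reachable_dist_eq (hloc : ∀ v, (G.neighborSet v).Finite)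
    (hx : {v | G.Reachable x v}.Infinite) (n : ℕ) :
    ∃ v, G.Reachable x v ∧ G.dist x v = n := by
  have hball : ∀ n, {v | G.Reachable x v ∧ G.dist x v ≤ n}.Finite := by
    intro n
    induction n with
    | zero =>
      refine (finite_singleton x).subset fun v ⟨hv, hv0⟩ => ?_
      exact (hv.dist_eq_zero_iff.1 (Nat.le_zero.1 hv0)).symm
    | succ n ih =>
      refine (ih.union (ih.biUnion fun w _ => hloc w)).subset fun v ⟨hv, hvn⟩ => ?_
      obtain hvn | hvn := hvn.lt_or_eq
      · exact Or.inl ⟨hv, Nat.lt_succ_iff.1 hvn⟩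
      obtain ⟨w, hw, hwv, hwn⟩ := hv.exists_adj_dist_eq hvn
      exact Or.inr (mem_biUnion ⟨hw, hwn.le⟩ hwv)
  obtain ⟨v, hv, k, hk⟩ : ∃ v, G.Reachable x v ∧ ∃ k, G.dist x v = n + k := by
    by_contra! h
    exact hx ((hball n).subset fun v hv => ⟨hv, by
      by_contra! hlt; exact h v hv (G.dist x v - n) (by omega)⟩)
  induction k generalizing v with
  | zero => exact ⟨v, hv, hk⟩
  | succ k ih =>
    obtain ⟨w, hw, -, hwk⟩ := hv.exists_adj_dist_eq hk
    exact ih w hw hwk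

/-- Kőnig's lemma: the parent map of a breadth-first search from `x` makes the spheres around `x`
an inverse system of finite nonempty sets. -/
theorem exists_geodesic_ray (hloc : ∀ v, (G.neighborSet v).Finite)
    (hx : {v | G.Reachable x v}.Infinite) :
    ∃ v : ℕ → V, v 0 = x ∧ (∀ n, G.Adj (v n) (v (n + 1))) ∧
      ∀ n, G.dist x (v n) = n := by
  obtain ⟨par, hpar⟩ := G.exists_parent_map x
  have hiter : ∀ k n v, G.Reachable x v → G.dist x v = n + k →
      G.Reachable x (par^[k] v) ∧ G.dist x (par^[k] v) = n := by
    intro k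
    induction k with
    | zero => exact fun n v hv hd => ⟨hv, hd⟩
    | succ k ih =>
      intro n v hv hd
      obtain ⟨hw, -, hwd⟩ := hpar v hv (by omega)
      exact ih n _ hw (by omega)
  let S : ℕ → Type _ := fun n => {v // G.Reachable x v ∧ G.dist x v = n}
  have : ∀ n, Nonempty (S n) := fun n =>
    let ⟨v, hv⟩ := exists_reachable_dist_eq hloc hx n; ⟨⟨v, hv⟩⟩
  have : Subsingleton (S 0) := ⟨fun a b => Subtype.ext <|
    (a.2.1.dist_eq_zero_iff.1 a.2.2).symm.trans (b.2.1.dist_eq_zero_iff.1 b.2.2)⟩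
  obtain ⟨f, hf⟩ := exists_seq_forall_proj_of_forall_finite (α := S)
    (fun {i j} _ a => ⟨par^[j - i] a.1, hiter (j - i) i a.1 a.2.1 (by have := a.2.2; omega)⟩)
    (fun i a => Subtype.ext (by simp))
    (fun i j k _ _ a => Subtype.ext (by
      simp only [← Function.iterate_add_apply]
      congr 1
      omega))
    (fun i a => by
      refine ((hloc a.1).preimage Subtype.val_injective.injOn).subset fun b hb => ?_
      have hb' : par b.1 = a.1 := by simpa using congrArg Subtype.val hb
      simpa [← hb'] using (hpar b.1 b.2.1 (by simp [b.2.2])).2.1)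
  refine ⟨fun n => (f n).1, ((f 0).2.1.dist_eq_zero_iff.1 (f 0).2.2).symm, fun n => ?_,
    fun n => (f n).2.2⟩
  have hn : par (f (n + 1)).1 = (f n).1 := by simpa using congrArg Subtype.val (hf n.le_succ)
  simpa [hn] using (hpar _ (f (n + 1)).2.1 (by simp [(f (n + 1)).2.2])).2.1

def IsInducedRay (G : SimpleGraph V) (v : ℕ → V) : Prop :=
  Function.Injective v ∧ ∀ m n, G.Adj (v m) (v n) ↔ m = n + 1 ∨ n = m + 1

lemma exists_isInducedRay (hloc : ∀ v, (G.neighborSet v).Finite)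
    (hx : {v | G.Reachable x v}.Infinite) : ∃ v, G.IsInducedRay v := by
  obtain ⟨v, -, hadj, hdist⟩ := exists_geodesic_ray hloc hx
  refine ⟨v, fun m n h => by simpa [hdist] using congrArg (G.dist x) h,
    fun m n => ⟨fun h => ?_, ?_⟩⟩
  · have hmn : m ≠ n := by rintro rfl; exact G.ne_of_adj h rfl
    have := h.diff_dist_adj (u := x)
    rw [hdist, hdist] at this
    omega
  · rintro (rfl | rfl)
    exacts [(hadj n).symm, hadj m]

lemma IsInducedRay.comp_succ {v : ℕ → V} (hv : G.IsInducedRay v) :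
    G.IsInducedRay fun n => v (n + 1) :=
  ⟨hv.1.comp (add_left_injective 1), fun m n => by rw [hv.2]; omega⟩

end SimpleGraph

lemma circuit_iff_isCircuit {M : Matroid α} {C : Set α} : Circuit M C ↔ M.IsCircuit C := by
  rw [isCircuit_iff_forall_ssubset, Circuit]
  exact and_congr_right fun hC => forall₂_congr fun I hI =>
    not_dep_iff (hI.subset.trans hC.subset_ground)

lemma forall_circuit_finite_iff_finitary {M : Matroid α} :
    (∀ C, Circuit M C → C.Finite) ↔ M.Finitary := by
  simp only [circuit_iff_isCircuit, finitary_iff_forall_isCircuit_finite]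

namespace Matroid

variable {M : Matroid α} {B C K X : Set α} {e f : α}

lemma IsCircuit.mem_inter_of_inter_subset_pair {a b : α} (hC : M.IsCircuit C)
    (hK : M.IsCocircuit K) (ha : a ∈ C ∩ K) (hCK : C ∩ K ⊆ {a, b}) : b ∈ C ∩ K := by
  obtain ⟨w, hw, hwa⟩ := (hC.isCocircuit_inter_nontrivial hK ⟨a, ha⟩).exists_ne a
  obtain rfl | rfl := hCK hw
  exacts [absurd rfl hwa, hw]

lemma exists_isCocircuit_disjoint_of_notMem_closure (he : e ∈ M.E) (heX : e ∉ M.closure X) :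
    ∃ K, M.IsCocircuit K ∧ e ∈ K ∧ Disjoint K X := by
  obtain ⟨I, hI⟩ := M.exists_isBasis' X
  rw [← hI.closure_eq_closure] at heX
  have heI : e ∉ I := notMem_subset (M.subset_closure I hI.indep.subset_ground) heX
  obtain ⟨B, hB, hIB⟩ :=
    ((hI.indep.insert_indep_iff_of_notMem heI).2 ⟨he, heX⟩).exists_isBase_superset
  have heB : e ∈ B := hIB (mem_insert e I)
  refine ⟨_, hB.compl_closure_sdiff_singleton_isCocircuit heB,
    ⟨he, hB.indep.notMem_closure_sdiff_of_mem heB⟩,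
    disjoint_left.2 fun x ⟨hxE, hxcl⟩ hxX => hxcl ?_⟩
  refine M.closure_subset_closure (subset_sdiff_singleton ((subset_insert e I).trans hIB) heI) ?_
  rw [hI.closure_eq_closure]
  exact M.mem_closure_of_mem' hxX hxE

lemma IsBase.finite_fundCircuit [M.Finitary] (hB : M.IsBase B) (e : α) :
    (M.fundCircuit e B).Finite := by
  by_cases heB : e ∈ B
  · simp [fundCircuit_eq_of_mem heB]
  by_cases heE : e ∈ M.E
  · exact (hB.fundCircuit_isCircuit heE heB).finite
  · simp [fundCircuit_eq_of_notMem_ground heE]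

lemma IsBase.finite_fundCocircuit [M✶.Finitary] (hB : M.IsBase B) (e : α) :
    (M.fundCocircuit e B).Finite :=
  hB.compl_isBase_dual.finite_fundCircuit e

lemma mem_of_mem_fundCircuit_of_ne (hf : f ∈ M.fundCircuit e B) (hfe : f ≠ e) :
    f ∈ B ∧ e ∈ M.E \ B := by
  refine ⟨(M.fundCircuit_subset_insert e B hf).resolve_left hfe, by_contra fun heE => hfe ?_,
    fun heB => hfe ?_⟩
  · rwa [fundCircuit_eq_of_notMem_ground heE] at hf
  · rwa [fundCircuit_eq_of_mem heB] at hf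

/-- Because of the junk value `M.fundCircuit e B = {e}` for `e ∈ B` or `e ∉ M.E`, this graph is
bipartite between `B` and `M.E \ B`, joining each `e ∈ M.E \ B` to its fundamental circuit. -/
def fundGraph (M : Matroid α) (B : Set α) : SimpleGraph α :=
  SimpleGraph.fromRel fun e f => f ∈ M.fundCircuit e B

lemma fundGraph_adj :
    (M.fundGraph B).Adj e f ↔ e ≠ f ∧ (f ∈ M.fundCircuit e B ∨ e ∈ M.fundCircuit f B) :=
  Iff.rfl

lemma fundGraph_adj_iff_of_notMem_of_mem (he : e ∉ B) (hf : f ∈ B) :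
    (M.fundGraph B).Adj e f ↔ f ∈ M.fundCircuit e B := by
  rw [fundGraph_adj, fundCircuit_eq_of_mem hf, mem_singleton_iff]
  exact ⟨fun ⟨_, h⟩ => h.resolve_right fun hef => he (hef ▸ hf),
    fun h => ⟨fun hef => he (hef ▸ hf), Or.inl h⟩⟩

lemma mem_of_fundGraph_adj (h : (M.fundGraph B).Adj e f) :
    (f ∈ B ∧ e ∈ M.E \ B) ∨ (e ∈ B ∧ f ∈ M.E \ B) := by
  obtain ⟨hne, h | h⟩ := fundGraph_adj.1 h
  exacts [Or.inl (mem_of_mem_fundCircuit_of_ne h hne.symm),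
    Or.inr (mem_of_mem_fundCircuit_of_ne h hne)]

lemma mem_iff_notMem_of_fundGraph_adj (h : (M.fundGraph B).Adj e f) : e ∈ B ↔ f ∉ B := by
  obtain ⟨hf, -, he⟩ | ⟨he, -, hf⟩ := mem_of_fundGraph_adj h <;> tauto

lemma IsBase.mem_ground_of_fundGraph_adj (hB : M.IsBase B) (h : (M.fundGraph B).Adj e f) :
    e ∈ M.E := by
  obtain ⟨-, he⟩ | ⟨he, -⟩ := mem_of_fundGraph_adj h
  exacts [he.1, hB.subset_ground he]

lemma IsBase.mem_ground_of_fundGraph_reachable (hB : M.IsBase B)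
    (h : (M.fundGraph B).Reachable e f) (he : e ∈ M.E) : f ∈ M.E := by
  obtain ⟨p⟩ := h
  induction p with
  | nil => exact he
  | cons hadj _ ih => exact ih (hB.mem_ground_of_fundGraph_adj hadj.symm)

lemma IsBase.finite_neighborSet_fundGraph [M.Finitary] [M✶.Finitary] (hB : M.IsBase B)
    (e : α) : ((M.fundGraph B).neighborSet e).Finite := by
  refine ((hB.finite_fundCircuit e).union (hB.finite_fundCocircuit e)).subset fun f hf => ?_
  obtain ⟨-, h | h⟩ := fundGraph_adj.1 hf
  exacts [Or.inl h, Or.inr (hB.mem_fundCocircuit_iff_mem_fundCircuit.2 h)]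

lemma IsCircuit.fundGraph_reachable [M.Finitary] (hB : M.IsBase B) (hC : M.IsCircuit C)
    (he : e ∈ C) (hf : f ∈ C) : (M.fundGraph B).Reachable e f := by
  induction hn : (C \ B).ncard using Nat.strong_induction_on generalizing C e f with
  | _ n ih =>
  obtain ⟨x, hxC, hxB⟩ := not_subset.1 fun hCB => hC.not_indep (hB.indep.subset hCB)
  suffices hx : ∀ y ∈ C, (M.fundGraph B).Reachable y x from (hx e he).trans (hx f hf).symm
  set K := M.fundCircuit x B
  have hK : M.IsCircuit K := hB.fundCircuit_isCircuit (hC.subset_ground hxC) hxB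
  have hKx : ∀ y ∈ K, (M.fundGraph B).Reachable y x := fun y hy => by
    obtain rfl | hyx := eq_or_ne y x
    · rfl
    · exact (fundGraph_adj.2 ⟨hyx, Or.inr hy⟩).reachable
  intro y hy
  by_cases hyK : y ∈ K
  · exact hKx y hyK
  obtain ⟨C', hC'CK, hC', hyC'⟩ := hC.strong_elimination hK hxC (M.mem_fundCircuit x B) hy hyK
  have hC'B : C' \ B ⊆ C \ B := fun w ⟨hwC', hwB⟩ =>
    ⟨(hC'CK hwC').1.resolve_right fun hwK =>
      hwB ((M.fundCircuit_subset_insert x B hwK).resolve_left (hC'CK hwC').2), hwB⟩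
  obtain ⟨z, hzC', hzK⟩ : (C' ∩ K).Nonempty := by
    by_contra! hC'K
    refine (hC'CK (hC'.eq_of_subset_isCircuit hC (fun w hw => ?_) ▸ hxC)).2 rfl
    exact (hC'CK hw).1.resolve_right fun hwK => hC'K.subset ⟨hw, hwK⟩
  have hlt : (C' \ B).ncard < n := hn ▸ ncard_lt_ncard
    (ssubset_of_subset_of_ne hC'B fun h => (hC'CK (h ▸ ⟨hxC, hxB⟩ : x ∈ C' \ B).1).2 rfl)
    hC.finite.sdiff
  exact (ih _ hlt hC' hyC' hzC' rfl).trans (hKx z hzK)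

/-- An induced ray `β 0, ε 0, β 1, ε 1, …` of `M.fundGraph B`. -/
structure IsFundRay (M : Matroid α) (B : Set α) (β ε : ℕ → α) : Prop where
  isBase : M.IsBase B
  mem_base : ∀ i, β i ∈ B
  mem_ground_sdiff : ∀ j, ε j ∈ M.E \ B
  injective_left : β.Injective
  injective_right : ε.Injective
  mem_fundCircuit_iff : ∀ i j, β i ∈ M.fundCircuit (ε j) B ↔ i = j ∨ i = j + 1

namespace IsFundRay

variable {β ε : ℕ → α}

lemma mem_fundCocircuit_iff (h : M.IsFundRay B β ε) (i j : ℕ) :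
    ε j ∈ M.fundCocircuit (β i) B ↔ i = j ∨ i = j + 1 := by
  rw [h.isBase.mem_fundCocircuit_iff_mem_fundCircuit, h.mem_fundCircuit_iff]

lemma eq_of_mem_fundCocircuit (h : M.IsFundRay B β ε) {i : ℕ} {w : α}
    (hw : w ∈ M.fundCocircuit (β i) B) (hwB : w ∈ B) : w = β i := by
  have hwK : w ∈ M.fundCocircuit (β i) B ∩ B := ⟨hw, hwB⟩
  rwa [M.fundCocircuit_inter_eq (h.mem_base i)] at hwK

lemma notMem_closure [M.Finitary] (h : M.IsFundRay B β ε) :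
    β 0 ∉ M.closure ((B \ range β) ∪ range ε) := by
  intro hcl
  obtain ⟨C, hCZ, hC, h0C⟩ := exists_isCircuit_of_mem_closure hcl fun h0 =>
    h0.elim (fun h0 => h0.2 ⟨0, rfl⟩)
      fun ⟨j, hj⟩ => (h.mem_ground_sdiff j).2 (hj ▸ h.mem_base 0)
  have hCK : ∀ j, ∀ w ∈ C ∩ M.fundCocircuit (β j) B,
      (w = β 0 ∧ j = 0) ∨ ∃ i, w = ε i ∧ (j = i ∨ j = i + 1) := by
    rintro j w ⟨hwC, hwK⟩
    obtain rfl | ⟨hwB, hwβ⟩ | ⟨i, rfl⟩ := hCZ hwC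
    · exact Or.inl ⟨rfl, h.injective_left (h.eq_of_mem_fundCocircuit hwK (h.mem_base 0)).symm⟩
    · exact absurd ⟨j, (h.eq_of_mem_fundCocircuit hwK hwB).symm⟩ hwβ
    · exact Or.inr ⟨i, rfl, (h.mem_fundCocircuit_iff j i).1 hwK⟩
  have hεC : ∀ j, ε j ∈ C := by
    intro j
    induction j with
    | zero =>
      refine (hC.mem_inter_of_inter_subset_pair
        (fundCocircuit_isCocircuit (h.mem_base 0) h.isBase)
        ⟨h0C, M.mem_fundCocircuit _ _⟩ fun w hw => ?_).1
      obtain ⟨rfl, -⟩ | ⟨i, rfl, hi⟩ := hCK 0 w hw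
      · exact Or.inl rfl
      · obtain rfl : i = 0 := by omega
        exact Or.inr rfl
    | succ j ih =>
      refine (hC.mem_inter_of_inter_subset_pair
        (fundCocircuit_isCocircuit (h.mem_base _) h.isBase)
        ⟨ih, (h.mem_fundCocircuit_iff _ _).2 (Or.inr rfl)⟩ fun w hw => ?_).1
      obtain ⟨-, hj⟩ | ⟨i, rfl, hi⟩ := hCK _ w hw
      · omega
      · obtain rfl | rfl : i = j ∨ i = j + 1 := by omega
        exacts [Or.inl rfl, Or.inr rfl]
  exact infinite_range_of_injective h.injective_right (hC.finite.subset (range_subset_iff.2 hεC))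

end IsFundRay

theorem not_isFundRay [M.Finitary] [M✶.Finitary] {β ε : ℕ → α} :
    ¬ M.IsFundRay B β ε := by
  intro h
  obtain ⟨K, hK, h0K, hKZ⟩ := exists_isCocircuit_disjoint_of_notMem_closure
    (h.isBase.subset_ground (h.mem_base 0)) h.notMem_closure
  have hβK : ∀ i, β i ∈ K := by
    intro i
    induction i with
    | zero => exact h0K
    | succ i ih =>
      have hC := h.isBase.fundCircuit_isCircuit (h.mem_ground_sdiff i).1 (h.mem_ground_sdiff i).2
      refine (hC.mem_inter_of_inter_subset_pair hK
        ⟨(h.mem_fundCircuit_iff i i).2 (Or.inl rfl), ih⟩ fun w ⟨hwC, hwK⟩ => ?_).2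
      obtain rfl | hwB := M.fundCircuit_subset_insert _ _ hwC
      · exact absurd (Or.inr ⟨i, rfl⟩) (disjoint_left.1 hKZ hwK)
      obtain ⟨k, rfl⟩ : w ∈ range β := by_contra fun hwβ =>
        disjoint_left.1 hKZ hwK (Or.inl ⟨hwB, hwβ⟩)
      obtain rfl | rfl := (h.mem_fundCircuit_iff k i).1 hwC
      exacts [Or.inl rfl, Or.inr rfl]
  exact infinite_range_of_injective h.injective_left
    (hK.isCircuit.finite.subset (range_subset_iff.2 hβK))

lemma exists_isFundRay_of_isInducedRay (hB : M.IsBase B) {v : ℕ → α}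
    (hv : (M.fundGraph B).IsInducedRay v) : ∃ β ε, M.IsFundRay B β ε := by
  wlog h0 : v 0 ∈ B generalizing v
  · exact this hv.comp_succ
      (by simpa [h0] using mem_iff_notMem_of_fundGraph_adj ((hv.2 0 1).2 (Or.inr rfl)))
  have hvB : ∀ n, v n ∈ B ↔ Even n := by
    intro n
    induction n with
    | zero => simpa using h0
    | succ n ih =>
      rw [Nat.even_add_one, ← ih,
        mem_iff_notMem_of_fundGraph_adj ((hv.2 n (n + 1)).2 (Or.inr rfl))]
      tauto
  have hβ : ∀ i, v (2 * i) ∈ B := fun i => (hvB _).2 (even_two_mul i)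
  have hε : ∀ j, v (2 * j + 1) ∉ B := fun j h => Nat.not_even_two_mul_add_one j ((hvB _).1 h)
  refine ⟨_, _, hB, hβ, fun j => ⟨?_, hε j⟩, hv.1.comp fun a b h => by omega,
    hv.1.comp fun a b h => by omega, fun i j => ?_⟩
  · exact hB.mem_ground_of_fundGraph_adj ((hv.2 _ (2 * j)).2 (Or.inl rfl))
  · rw [← fundGraph_adj_iff_of_notMem_of_mem (hε j) (hβ i), hv.2]
    omega

lemma IsBase.finite_setOf_fundGraph_reachable [M.Finitary] [M✶.Finitary] (hB : M.IsBase B)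
    (e : α) : {f | (M.fundGraph B).Reachable e f}.Finite := by
  by_contra hinf
  obtain ⟨v, hv⟩ := SimpleGraph.exists_isInducedRay hB.finite_neighborSet_fundGraph hinf
  obtain ⟨β, ε, h⟩ := exists_isFundRay_of_isInducedRay hB hv
  exact not_isFundRay h

def IsSumOver (M : Matroid α) (P : Set (Set α)) : Prop :=
  ∀ I ⊆ M.E, M.Indep I ↔ ∀ p ∈ P, (M ↾ p).Indep (I ∩ p)

variable {P : Set (Set α)}

lemma isSumOver_iff_forall_isCircuit :
    M.IsSumOver P ↔ ∀ C, M.IsCircuit C → ∃ p ∈ P, C ⊆ p := by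
  simp only [IsSumOver, restrict_indep_iff, inter_subset_right, and_true]
  refine ⟨fun h C hC => ?_,
    fun h I hI => ⟨fun hI p _ => hI.subset inter_subset_left, fun hIP => ?_⟩⟩
  · obtain ⟨p, hp, hCp⟩ : ∃ p ∈ P, ¬ M.Indep (C ∩ p) := by
      by_contra! h'
      exact hC.not_indep ((h C hC.subset_ground).2 h')
    exact ⟨p, hp, hC.eq_of_not_indep_subset hCp inter_subset_left ▸ inter_subset_right⟩
  · by_contra hI'
    obtain ⟨C, hCI, hC⟩ := ((not_indep_iff hI).1 hI').exists_isCircuit_subset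
    obtain ⟨p, hp, hCp⟩ := h C hC
    exact hC.not_indep ((hIP p hp).subset (subset_inter hCI hCp))

namespace IsSumOver

lemma finitary (h : M.IsSumOver P) (hfin : ∀ p ∈ P, p.Finite) : M.Finitary := by
  refine finitary_iff_forall_isCircuit_finite.2 fun C hC => ?_
  obtain ⟨p, hp, hCp⟩ := isSumOver_iff_forall_isCircuit.1 h C hC
  exact (hfin p hp).subset hCp

lemma indep_iff (h : M.IsSumOver P) {I : Set α} (hI : I ⊆ M.E) :
    M.Indep I ↔ ∀ p ∈ P, M.Indep (I ∩ p) := by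
  simpa [restrict_indep_iff] using h I hI

lemma isBase_biUnion (h : M.IsSumOver P) (hdisj : P.PairwiseDisjoint id) (hP : ⋃₀ P = M.E)
    {Bs : Set α → Set α} (hBs : ∀ p ∈ P, M.IsBase (Bs p)) :
    M.IsBase (⋃ p ∈ P, Bs p ∩ p) := by
  set B := ⋃ p ∈ P, Bs p ∩ p
  have hBp : ∀ p ∈ P, B ∩ p = Bs p ∩ p := fun p hp => by
    refine subset_antisymm (fun e ⟨heB, hep⟩ => ?_) fun e he => ⟨mem_biUnion hp he, he.2⟩
    obtain ⟨q, hq, heq⟩ := mem_iUnion₂.1 heB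
    obtain rfl : q = p := hdisj.elim hq hp (not_disjoint_iff.2 ⟨e, heq.2, hep⟩)
    exact heq
  have hBE : B ⊆ M.E :=
    iUnion₂_subset fun p hp => inter_subset_left.trans (hBs p hp).subset_ground
  refine ((h.indep_iff hBE).2 fun p hp => ?_).isBase_of_forall_insert
    fun e ⟨heE, heB⟩ hins => ?_
  · rw [hBp p hp]
    exact (hBs p hp).indep.subset inter_subset_left
  obtain ⟨p, hp, hep⟩ := mem_sUnion.1 (hP ▸ heE : e ∈ ⋃₀ P)
  have hins' : M.Indep (insert e (Bs p)) := by
    refine (h.indep_iff (insert_subset heE (hBs p hp).subset_ground)).2 fun q hq => ?_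
    obtain rfl | hqp := eq_or_ne q p
    · rw [insert_inter_of_mem hep, ← hBp q hq]
      exact hins.subset (insert_subset_insert inter_subset_left)
    · have heq : e ∉ q := fun heq =>
        hqp (hdisj.elim hq hp (not_disjoint_iff.2 ⟨e, heq, hep⟩))
      rw [insert_inter_of_notMem heq]
      exact (hBs p hp).indep.subset inter_subset_left
  have heBp : e ∉ Bs p := fun he => heB (mem_biUnion hp ⟨he, hep⟩)
  exact ((hBs p hp).insert_dep ⟨heE, heBp⟩).not_indep hins'

lemma dual (h : M.IsSumOver P) (hdisj : P.PairwiseDisjoint id) (hP : ⋃₀ P = M.E) :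
    M✶.IsSumOver P := by
  intro I hI
  simp only [restrict_indep_iff, inter_subset_right, and_true]
  refine ⟨fun hI p _ => hI.subset inter_subset_left, fun hIP => ?_⟩
  choose! Bs hBs hIBs using fun p hp =>
    (dual_indep_iff_exists (M := M) (inter_subset_left.trans hI)).1 (hIP p hp)
  refine (dual_indep_iff_exists (M := M) hI).2
    ⟨_, h.isBase_biUnion hdisj hP hBs, disjoint_left.2 fun e heI he => ?_⟩
  obtain ⟨p, hp, heBs, hep⟩ := mem_iUnion₂.1 he
  exact disjoint_left.1 (hIBs p hp) ⟨heI, hep⟩ heBs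

end IsSumOver

lemma exists_isSumOver_of_finitary [M.Finitary] [M✶.Finitary] :
    ∃ P : Set (Set α), P.PairwiseDisjoint id ∧ ⋃₀ P = M.E ∧ (∀ p ∈ P, p.Finite) ∧
      M.IsSumOver P := by
  obtain ⟨B, hB⟩ := M.exists_isBase
  refine ⟨(fun e => {f | (M.fundGraph B).Reachable e f}) '' M.E, ?_, ?_, ?_, ?_⟩
  · rintro _ ⟨e, -, rfl⟩ _ ⟨f, -, rfl⟩ hne
    refine disjoint_left.2 fun x hex hfx => hne ?_
    have hef : (M.fundGraph B).Reachable e f := SimpleGraph.Reachable.trans hex hfx.symm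
    exact Set.ext fun g => ⟨hef.symm.trans, hef.trans⟩
  · refine subset_antisymm (sUnion_subset ?_) fun e he =>
      mem_sUnion.2 ⟨_, ⟨e, he, rfl⟩, SimpleGraph.Reachable.refl e⟩
    rintro _ ⟨e, he, rfl⟩ f hf
    exact hB.mem_ground_of_fundGraph_reachable hf he
  · rintro _ ⟨e, -, rfl⟩
    exact hB.finite_setOf_fundGraph_reachable e
  · refine isSumOver_iff_forall_isCircuit.2 fun C hC => ?_
    obtain ⟨e, he⟩ := hC.nonempty
    exact ⟨_, ⟨e, hC.subset_ground he, rfl⟩, fun f hf => hC.fundGraph_reachable hB he hf⟩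

end Matroid

theorem stmt8 (M : Matroid α) :
    ((∀ C, Circuit M C → C.Finite) ∧ (∀ D, Circuit M✶ D → D.Finite)) ↔
      ∃ P : Set (Set α), P.PairwiseDisjoint id ∧ ⋃₀ P = M.E ∧ (∀ p ∈ P, p.Finite) ∧
        ∀ I ⊆ M.E, (M.Indep I ↔ ∀ p ∈ P, (M ↾ p).Indep (I ∩ p)) := by
  rw [forall_circuit_finite_iff_finitary, forall_circuit_finite_iff_finitary]
  refine ⟨fun ⟨_, _⟩ => M.exists_isSumOver_of_finitary, ?_⟩
  rintro ⟨P, hdisj, hP, hfin, h : M.IsSumOver P⟩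
  exact ⟨h.finitary hfin, (h.dual hdisj hP).finitary hfin⟩
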